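/- Let F be a real n×m matrix. Then det(1 + Fᵀ·F) = Σ_P det(F_P)², where the sum runs over all patterns P = (I,J) of every size k = 0,1,…,m (I a k-subset of the rows, J a k-subset of the columns), the empty pattern contributing 1. -/

import Mathlib

/-!
Expanding `det (1 + M)` multilinearly in the rows of `M` gives the sum of all principal minors
of `M`. For `M = Fᵀ F` the principal minor on a column set `J` is the Gram determinant of the
columns of `F` indexed by `J`, which by Cauchy–Binet is `∑_I det (F_{I,J})²`.
-/

open Matrix

/-- The minor of a real `n × m` matrix `F` given by a `k`-element set `I` of row indices and a
`k`-element set `J` of column indices. For `k = 0` it equals `1`. -/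
def Matrix.minorOn {n m k : ℕ} (F : Matrix (Fin n) (Fin m) ℝ)
    (I : {s : Finset (Fin n) // s.card = k}) (J : {s : Finset (Fin m) // s.card = k}) : ℝ :=
  (F.submatrix (I.1.orderEmbOfFin I.2) (J.1.orderEmbOfFin J.2)).det

theorem Finset.sum_eq_sum_range_sum_card_eq {α M : Type*} [Fintype α] [AddCommMonoid M]
    (f : Finset α → M) :
    ∑ s, f s = ∑ k ∈ range (Fintype.card α + 1), ∑ s : {s : Finset α // s.card = k}, f s := by
  rw [← sum_fiberwise_of_maps_to (g := card) (t := range (Fintype.card α + 1))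
    fun s _ => mem_range_succ_iff.2 (card_le_univ s)]
  exact sum_congr rfl fun k _ => sum_subtype _ (by simp) f

namespace Matrix

variable {R : Type*} [CommRing R]

open exteriorPower in
/-- **Cauchy–Binet**. `det (A * B)` is the pairing of `⋀ φ`, where `φ j` is the linear form
`x ↦ (x ᵥ* B) j`, with `⋀ (rows of A)`; expanding the latter in the basis of `⋀ᵏ (ι → R)`
induced by the standard basis gives the formula. -/
theorem det_mul_eq_sum_det_mul_det {ι : Type*} [Fintype ι] [LinearOrder ι] {k : ℕ}
    (A : Matrix (Fin k) ι R) (B : Matrix ι (Fin k) R) :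
    (A * B).det = ∑ s : {s : Finset ι // s.card = k},
      (A.submatrix id (s.1.orderEmbOfFin s.2)).det *
        (B.submatrix (s.1.orderEmbOfFin s.2) id).det := by
  let b := Pi.basisFun R ι
  let φ : Fin k → Module.Dual R (ι → R) := fun j => LinearMap.proj j ∘ₗ B.vecMulLinear
  have h_pairing : (A * B).det = pairingDual R _ k (ιMulti R k φ) (ιMulti R k (A ·)) := by
    rw [pairingDual_ιMulti_ιMulti]
    rfl
  rw [h_pairing, ← (b.exteriorPower k).sum_repr (ιMulti R k (A ·)), map_sum]
  let e : Set.powersetCard ι k ≃ {s : Finset ι // s.card = k} :=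
    Equiv.subtypeEquivRight fun _ => Iff.rfl
  refine Fintype.sum_equiv e _ _ fun s => ?_
  rw [map_smul, smul_eq_mul, ← Module.Basis.coord_apply, basis_coord, ιMultiDual_apply_ιMulti,
    basis_apply, ιMulti_family, pairingDual_ιMulti_ιMulti]
  congr 2
  ext i j
  simp only [φ, b, of_apply, submatrix_apply, id_eq, Function.comp_apply, Pi.basisFun_apply,
    LinearMap.comp_apply, LinearMap.proj_apply, vecMulLinear_apply, single_one_vecMul]
  rfl

theorem det_one_add_eq_sum_det_submatrix {n : Type*} [Fintype n] [DecidableEq n]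
    (M : Matrix n n R) :
    (1 + M).det = ∑ s : Finset n, (M.submatrix ((↑) : s → n) (↑)).det := by
  rw [add_comm]
  exact (detRowAlternating.map_add_univ M (1 : Matrix n n R)).trans
    (Finset.sum_congr rfl fun s _ => det_piecewise_one_eq_submatrix_det M s)

theorem det_submatrix_orderEmbOfFin {n : Type*} [LinearOrder n] (M : Matrix n n R)
    (s : Finset n) {k : ℕ} (h : s.card = k) :
    (M.submatrix (s.orderEmbOfFin h) (s.orderEmbOfFin h)).det =
      (M.submatrix ((↑) : s → n) (↑)).det := by
  rw [← det_submatrix_equiv_self (s.orderIsoOfFin h).toEquiv]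
  rfl

theorem det_transpose_mul_self_eq_sum_sq {ι : Type*} [Fintype ι] [LinearOrder ι] {k : ℕ}
    (A : Matrix ι (Fin k) R) :
    (Aᵀ * A).det = ∑ s : {s : Finset ι // s.card = k},
      (A.submatrix (s.1.orderEmbOfFin s.2) id).det ^ 2 := by
  rw [det_mul_eq_sum_det_mul_det]
  refine Finset.sum_congr rfl fun s _ => ?_
  rw [← transpose_submatrix, det_transpose, sq]

theorem det_submatrix_transpose_mul_self_eq_sum_sq {ι κ : Type*} [Fintype ι] [LinearOrder ι]
    [LinearOrder κ] (A : Matrix ι κ R) (t : Finset κ) {k : ℕ} (ht : t.card = k) :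
    ((Aᵀ * A).submatrix (t.orderEmbOfFin ht) (t.orderEmbOfFin ht)).det =
      ∑ s : {s : Finset ι // s.card = k},
        (A.submatrix (s.1.orderEmbOfFin s.2) (t.orderEmbOfFin ht)).det ^ 2 := by
  rw [submatrix_mul _ _ _ id _ Function.bijective_id, ← transpose_submatrix,
    det_transpose_mul_self_eq_sum_sq]
  rfl

end Matrix

/-- For a real `n × m` matrix `F`, `det(1 + Fᵀ F) = Σ_P det(F_P)²`, summing over all patterns
`P = (I, J)` of every size `k = 0, 1, …, m`; the empty pattern contributes `1`. -/
theorem det_one_add_transpose_mul_self {n m : ℕ} (F : Matrix (Fin n) (Fin m) ℝ) :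
    (1 + Fᵀ * F).det =
      ∑ k ∈ Finset.range (m + 1),
        ∑ I : {s : Finset (Fin n) // s.card = k}, ∑ J : {s : Finset (Fin m) // s.card = k},
          (F.minorOn I J) ^ 2 := by
  rw [det_one_add_eq_sum_det_submatrix, Finset.sum_eq_sum_range_sum_card_eq, Fintype.card_fin]
  refine Finset.sum_congr rfl fun k _ => ?_
  rw [Finset.sum_comm]
  refine Finset.sum_congr rfl fun J _ => ?_
  rw [← det_submatrix_orderEmbOfFin _ _ J.2, det_submatrix_transpose_mul_self_eq_sum_sq]
  rfl
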